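/- With notation as above (g in O(q+r,p) in block form, Z with ᵀZ·Z < 1_p, j(g,Z) := C·Z + D, and gZ := (A·Z+B)·(C·Z+D)⁻¹), one has the identity 1_p − ᵀZ·Z = ᵀj(g,Z) · (1_p − ᵀ(gZ)·(gZ)) · j(g,Z). -/

import Mathlib

/-!
Write `g = fromBlocks A B C D` and `Q = fromBlocks 1 0 0 (-1)`. The column block `v = [Z; 1]`
is mapped by `g` to `[A Z + B; C Z + D] = [M; W]`, and the quadratic form of `Q` evaluated on a
column block `[X; Y]` is `ᵀX X − ᵀY Y`. Since `g` preserves `Q`, comparing this form on `v` and `g v`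
gives `ᵀW W − ᵀM M = 1 − ᵀZ Z`. Positivity of `1 − ᵀZ Z` then makes `ᵀW W` positive definite, so
`W` is invertible, and conjugating `1 − ᵀ(M W⁻¹)(M W⁻¹)` by `W` returns `ᵀW W − ᵀM M`.
-/

open Matrix

section CommRing

variable {R : Type*} [CommRing R] {m n k : Type*} [Fintype m] [Fintype n] [DecidableEq n]

lemma transpose_fromRows_mul_fromBlocks_one_neg_one_mul_fromRows [DecidableEq m]
    (X : Matrix m k R) (Y : Matrix n k R) :
    (fromRows X Y)ᵀ * fromBlocks (1 : Matrix m m R) 0 0 (-1 : Matrix n n R) * fromRows X Y =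
      Xᵀ * X - Yᵀ * Y := by
  rw [transpose_fromRows, fromCols_mul_fromBlocks, fromCols_mul_fromRows]
  simp only [Matrix.mul_one, Matrix.mul_zero, add_zero, Matrix.mul_neg, zero_sub,
    Matrix.neg_mul, ← sub_eq_add_neg]

lemma transpose_mul_mul_mul_of_transpose_mul_mul_eq {l : Type*} [Fintype l]
    {g Q : Matrix l l R} (hg : gᵀ * Q * g = Q) (v : Matrix l k R) :
    (g * v)ᵀ * Q * (g * v) = vᵀ * Q * v := by
  conv_rhs => rw [← hg]
  simp only [transpose_mul, Matrix.mul_assoc]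

lemma transpose_mul_self_sub_transpose_mul_self_of_isometry [DecidableEq m]
    {A : Matrix m m R} {B : Matrix m n R} {C : Matrix n m R} {D : Matrix n n R}
    (hg : (fromBlocks A B C D)ᵀ * fromBlocks (1 : Matrix m m R) 0 0 (-1 : Matrix n n R) *
        fromBlocks A B C D = fromBlocks (1 : Matrix m m R) 0 0 (-1 : Matrix n n R))
    (Z : Matrix m n R) :
    (C * Z + D)ᵀ * (C * Z + D) - (A * Z + B)ᵀ * (A * Z + B) = 1 - Zᵀ * Z := by
  have hv : fromBlocks A B C D * fromRows Z (1 : Matrix n n R) =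
      fromRows (A * Z + B) (C * Z + D) := by
    rw [fromBlocks_mul_fromRows, Matrix.mul_one, Matrix.mul_one]
  have hinvariant := transpose_mul_mul_mul_of_transpose_mul_mul_eq hg (fromRows Z 1)
  rw [hv, transpose_fromRows_mul_fromBlocks_one_neg_one_mul_fromRows,
    transpose_fromRows_mul_fromBlocks_one_neg_one_mul_fromRows, transpose_one,
    Matrix.one_mul] at hinvariant
  rw [← neg_sub, hinvariant, neg_sub]

lemma transpose_mul_one_sub_transpose_mul_self_mul_inv_mul
    {W : Matrix n n R} (hW : IsUnit W) (M : Matrix m n R) :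
    Wᵀ * (1 - (M * W⁻¹)ᵀ * (M * W⁻¹)) * W = Wᵀ * W - Mᵀ * M := by
  have hWT : IsUnit Wᵀ := W.isUnit_transpose.mpr hW
  rw [transpose_mul, transpose_nonsing_inv, Matrix.mul_sub, Matrix.sub_mul, Matrix.mul_one]
  congr 1
  simp only [Matrix.mul_assoc, Matrix.nonsing_inv_mul _ ((isUnit_iff_isUnit_det W).mp hW),
    Matrix.mul_one]
  rw [← Matrix.mul_assoc, Matrix.mul_nonsing_inv _ ((isUnit_iff_isUnit_det _).mp hWT),
    Matrix.one_mul]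

end CommRing

lemma isUnit_of_transpose_mul_self_eq_add_posDef {m n : Type*} [Fintype m] [Fintype n]
    [DecidableEq n] {W : Matrix n n ℝ} {M : Matrix m n ℝ} {P : Matrix n n ℝ} (hP : P.PosDef)
    (h : Wᵀ * W = Mᵀ * M + P) : IsUnit W := by
  have hM : (Mᵀ * M).PosSemidef := by
    simpa only [conjTranspose_eq_transpose_of_trivial] using posSemidef_conjTranspose_mul_self M
  have hWW : IsUnit (Wᵀ * W) := (h ▸ PosDef.posSemidef_add hM hP).isUnit
  rw [isUnit_iff_isUnit_det, det_mul] at hWW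
  rw [isUnit_iff_isUnit_det]
  exact isUnit_of_mul_isUnit_right hWW

/-- Transformation rule of the defect matrix `1 − ᵀZ·Z` under the fractional linear
action of `O(q+r,p)`: `1 − ᵀZZ = ᵀj(g,Z)·(1 − ᵀ(gZ)(gZ))·j(g,Z)` with `j(g,Z) = C·Z+D`. -/
theorem stmt_6 (p q r : ℕ)
    (A : Matrix (Fin (q + r)) (Fin (q + r)) ℝ) (B : Matrix (Fin (q + r)) (Fin p) ℝ)
    (C : Matrix (Fin p) (Fin (q + r)) ℝ) (D : Matrix (Fin p) (Fin p) ℝ)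
    (hg : (fromBlocks A B C D)ᵀ *
        fromBlocks (1 : Matrix (Fin (q + r)) (Fin (q + r)) ℝ) 0 0
          (-(1 : Matrix (Fin p) (Fin p) ℝ)) * fromBlocks A B C D =
      fromBlocks (1 : Matrix (Fin (q + r)) (Fin (q + r)) ℝ) 0 0
        (-(1 : Matrix (Fin p) (Fin p) ℝ)))
    (Z : Matrix (Fin (q + r)) (Fin p) ℝ)
    (hZ : ((1 : Matrix (Fin p) (Fin p) ℝ) - Zᵀ * Z).PosDef) :
    (1 : Matrix (Fin p) (Fin p) ℝ) - Zᵀ * Z =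
      (C * Z + D)ᵀ *
        ((1 : Matrix (Fin p) (Fin p) ℝ) -
          ((A * Z + B) * (C * Z + D)⁻¹)ᵀ * ((A * Z + B) * (C * Z + D)⁻¹)) *
        (C * Z + D) := by
  have hdefect := transpose_mul_self_sub_transpose_mul_self_of_isometry hg Z
  have hW : IsUnit (C * Z + D) :=
    isUnit_of_transpose_mul_self_eq_add_posDef hZ (sub_eq_iff_eq_add'.mp hdefect)
  rw [transpose_mul_one_sub_transpose_mul_self_mul_inv_mul hW, hdefect]
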